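/- arXiv:1711.01323 — 4 statements merged into one kernel-verified Lean document; each statement's English description precedes it below -/
import Mathlib

section
/- Fix a real τ > 1 and q ∈ {1, 2}. Let β be a random variable uniformly distributed on [0, 1), and set a = τ^β (so that ln a is uniform on [0, ln τ)). For a real number d ≥ 1, define d'(a) to be the smallest element of {a τ^ℓ : ℓ ∈ ℤ, ℓ ≥ 0} that is ≥ d. Then d'(a) ≥ d holds always, and E_β[(d'(a))^q] = ((τ^q − 1)/(q ln τ)) · d^q. -/
/-!
Writing `d = τ ^ L` with `L = log_τ d ≥ 0`, the least level `τ ^ (β + ℓ) ≥ d` has exponent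
`β + ⌈L - β⌉ = L + fract (β - L)`, so `d'(a) = d · τ ^ fract (β - L) ≥ d`. As `β` runs uniformly
over `[0, 1)`, so does `fract (β - L)` (integral of a 1-periodic function over a period), hence
`E[d'(a) ^ q] = d ^ q ∫₀¹ τ ^ (q x) dx = d ^ q (τ ^ q - 1) / (q ln τ)`.
-/

open MeasureTheory

/-- `dRound τ a d` is the smallest element of `{a τ^ℓ : ℓ ∈ ℤ, ℓ ≥ 0}` that is `≥ d`. -/
noncomputable def dRound (τ a d : ℝ) : ℝ :=
  sInf {x : ℝ | (∃ ℓ : ℕ, x = a * τ ^ ℓ) ∧ d ≤ x}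

open Real

theorem dRound_eq_mul_pow_ceil_logb {τ a d : ℝ} (hτ : 1 < τ) (ha : 0 < a) (hd : 0 < d) :
    dRound τ a d = a * τ ^ ⌈logb τ (d / a)⌉₊ := by
  have le_iff : ∀ ℓ : ℕ, d ≤ a * τ ^ ℓ ↔ ⌈logb τ (d / a)⌉₊ ≤ ℓ := fun ℓ => by
    rw [Nat.ceil_le, logb_le_iff_le_rpow hτ (div_pos hd ha), rpow_natCast, div_le_iff₀' ha]
  refine IsLeast.csInf_eq ⟨⟨⟨_, rfl⟩, (le_iff _).2 le_rfl⟩, ?_⟩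
  rintro _ ⟨⟨ℓ, rfl⟩, hℓ⟩
  exact mul_le_mul_of_nonneg_left (pow_le_pow_right₀ hτ.le ((le_iff ℓ).1 hℓ)) ha.le

theorem add_natCeil_sub_eq_add_fract {L β : ℝ} (hβL : β < L + 1) :
    β + ⌈L - β⌉₊ = L + Int.fract (β - L) := by
  rw [natCast_ceil_eq_intCast_ceil_of_neg_one_lt (by linarith), ← neg_sub β L, Int.ceil_neg,
    Int.fract]
  push_cast
  ring

theorem dRound_rpow_eq_mul_rpow_fract {τ d β : ℝ} (hτ : 1 < τ) (hd : 1 ≤ d) (hβ : β < 1) :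
    dRound τ (τ ^ β) d = d * τ ^ Int.fract (β - logb τ d) := by
  have hτ0 : 0 < τ := by linarith
  have hL : 0 ≤ logb τ d := logb_nonneg hτ hd
  rw [dRound_eq_mul_pow_ceil_logb hτ (rpow_pos_of_pos hτ0 β) (by linarith),
    logb_div (by positivity) (rpow_pos_of_pos hτ0 β).ne', logb_rpow hτ0 hτ.ne', ← rpow_natCast,
    ← rpow_add hτ0, add_natCeil_sub_eq_add_fract (by linarith), rpow_add hτ0,
    rpow_logb hτ0 hτ.ne' (by linarith)]

theorem setIntegral_Ico_zero_one_comp_fract_sub {E : Type*} [NormedAddCommGroup E]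
    [NormedSpace ℝ E] (g : ℝ → E) (t : ℝ) :
    ∫ x in Set.Ico (0 : ℝ) 1, g (Int.fract (x - t)) = ∫ x in Set.Ico (0 : ℝ) 1, g x := by
  have periodic : Function.Periodic (fun x => g (Int.fract x)) 1 :=
    (Int.fract_periodic ℝ).comp g
  calc ∫ x in Set.Ico (0 : ℝ) 1, g (Int.fract (x - t))
      = ∫ x in (0 : ℝ)..1, g (Int.fract (x - t)) := by
        rw [intervalIntegral.integral_of_le zero_le_one, integral_Ico_eq_integral_Ioc]
    _ = ∫ x in (0 : ℝ)..0 + 1, g (Int.fract x) := by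
        rw [intervalIntegral.integral_comp_sub_right (fun x => g (Int.fract x)), zero_sub,
          ← neg_add_eq_sub, periodic.intervalIntegral_add_eq]
    _ = ∫ x in Set.Ico (0 : ℝ) 1, g (Int.fract x) := by
        rw [zero_add, intervalIntegral.integral_of_le zero_le_one, integral_Ico_eq_integral_Ioc]
    _ = ∫ x in Set.Ico (0 : ℝ) 1, g x :=
        setIntegral_congr_fun measurableSet_Ico fun x hx => by rw [Int.fract_eq_self.2 hx]

theorem setIntegral_Ico_zero_one_exp_mul {c : ℝ} (hc : c ≠ 0) :
    ∫ x in Set.Ico (0 : ℝ) 1, exp (c * x) = (exp c - 1) / c := by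
  rw [integral_Ico_eq_integral_Ioc, ← intervalIntegral.integral_of_le zero_le_one,
    intervalIntegral.integral_comp_mul_left (fun y => exp y) hc, integral_exp, smul_eq_mul]
  field_simp
  simp

theorem setIntegral_Ico_zero_one_rpow_pow {τ : ℝ} (hτ : 1 < τ) {q : ℕ} (hq : q ≠ 0) :
    ∫ x in Set.Ico (0 : ℝ) 1, (τ ^ x) ^ q = (τ ^ q - 1) / (q * log τ) := by
  have hτ0 : 0 < τ := by linarith
  have exp_form : ∀ x : ℝ, (τ ^ x) ^ q = exp ((q * log τ) * x) := fun x => by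
    rw [rpow_def_of_pos hτ0, ← exp_nat_mul]
    ring_nf
  simp_rw [exp_form]
  rw [setIntegral_Ico_zero_one_exp_mul (mul_ne_zero (Nat.cast_ne_zero.2 hq) (log_pos hτ).ne'),
    exp_nat_mul, exp_log hτ0]

/-- Random discretization of distances (Lemma 4.2): with `β` uniform on `[0,1)` and
`a = τ^β`, every `d ≥ 1` satisfies `d'(a) ≥ d`, and
`E_β[(d'(a))^q] = ((τ^q − 1)/(q ln τ)) · d^q`. -/
theorem stmt7 (τ : ℝ) (hτ : 1 < τ) (q : ℕ) (hq : q = 1 ∨ q = 2)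
    (d : ℝ) (hd : 1 ≤ d) :
    (∀ β ∈ Set.Ico (0 : ℝ) 1, d ≤ dRound τ (τ ^ β) d) ∧
    (∫ β in Set.Ico (0 : ℝ) 1, (dRound τ (τ ^ β) d) ^ q) =
      ((τ ^ q - 1) / (q * Real.log τ)) * d ^ q := by
  constructor
  · rintro β ⟨-, hβ⟩
    rw [dRound_rpow_eq_mul_rpow_fract hτ hd hβ]
    exact le_mul_of_one_le_right (by linarith) (one_le_rpow hτ.le (Int.fract_nonneg _))
  · have hq0 : q ≠ 0 := by omega
    calc ∫ β in Set.Ico (0 : ℝ) 1, (dRound τ (τ ^ β) d) ^ q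
        = ∫ β in Set.Ico (0 : ℝ) 1, d ^ q * (τ ^ Int.fract (β - logb τ d)) ^ q :=
          setIntegral_congr_fun measurableSet_Ico fun β hβ => by
            rw [dRound_rpow_eq_mul_rpow_fract hτ hd hβ.2, mul_pow]
      _ = ((τ ^ q - 1) / (q * log τ)) * d ^ q := by
          rw [integral_const_mul, setIntegral_Ico_zero_one_comp_fract_sub (fun x => (τ ^ x) ^ q),
            setIntegral_Ico_zero_one_rpow_pow hτ hq0, mul_comm]
end

section
/- Let F be a finite set, k and m integers, and let C*, C_full, C_part be finite disjoint index sets equipped with subsets F_j ⊆ F for each j ∈ C* ∪ C_part and B_j ⊆ F for each j ∈ C_full, such that the sets {F_j : j ∈ C*} are pairwise disjoint. Let P ⊆ ℝ^F be the polytope of all y ∈ [0,1]^F satisfying: Σ_{i∈F} y_i ≤ k; Σ_{i∈F_j} y_i = 1 for every j ∈ C*; Σ_{i∈B_j} y_i ≤ 1 for every j ∈ C_full; Σ_{i∈F_j} y_i ≤ 1 for every j ∈ C_part; and |C_full| + Σ_{j∈C_part} Σ_{i∈F_j} y_i ≥ m. If y* is an extreme point of P such that Σ_{i∈B_j} y*_i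 < 1 for every j ∈ C_full and Σ_{i∈F_j} y*_i < 1 for every j ∈ C_part, then y* has at most two coordinates lying strictly between 0 and 1. -/
/-!
If `y*` had three fractional coordinates, we find a nonzero direction `d`, supported on them, that
keeps every tight constraint tight; the non-core constraints being slack, `y* ± ε d` stays in `P`
for small `ε`, contradicting extremality. Such a `d` exists by counting: a core set `F_j` meeting
the fractional support contains at least two fractional coordinates (its `y*`-sum is the integer
`1`), so the core equalities, the coverage constraint and (when tight) the cardinality constraint
are fewer than the fractional coordinates. The only exception, tight cardinality with exactly one
fractional coordinate outside `⋃ F_j`, is ruled out by integrality, and with none outside, the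
cardinality constraint already follows from the core equalities.
-/

open Finset Filter Topology

theorem exists_ne_zero_forall_eq_zero_of_card_lt {F : Type*} [Fintype F] (s : Finset F)
    (Φ : Finset (Module.Dual ℝ (F → ℝ))) (h : #Φ < #s) :
    ∃ d : F → ℝ, d ≠ 0 ∧ (∀ i ∉ s, d i = 0) ∧ ∀ φ ∈ Φ, φ d = 0 := by
  classical
  let L : (F → ℝ) →ₗ[ℝ] (Φ ⊕ (sᶜ : Finset F) → ℝ) :=
    LinearMap.pi (Sum.elim (fun φ => φ.1) fun i => LinearMap.proj i.1)
  have hdim : Module.finrank ℝ (Φ ⊕ (sᶜ : Finset F) → ℝ) < Module.finrank ℝ (F → ℝ) := by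
    simp only [Module.finrank_fintype_fun_eq_card, Fintype.card_sum, Fintype.card_coe,
      card_compl]
    have := s.card_le_univ
    omega
  obtain ⟨d, hd, hd0⟩ :=
    (Submodule.ne_bot_iff _).1 (LinearMap.ker_ne_bot_of_finrank_lt (f := L) hdim)
  have hL := fun a => congrFun (LinearMap.mem_ker.1 hd) a
  exact ⟨d, hd0, fun i hi => hL (.inr ⟨i, mem_compl.2 hi⟩), fun φ hφ => hL (.inl ⟨φ, hφ⟩)⟩

theorem notMem_extremePoints_of_eventually_add_smul_mem {E : Type*} [AddCommGroup E]
    [Module ℝ E] {P : Set E} {x d : E} (hd : d ≠ 0)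
    (h : ∀ᶠ c in 𝓝 (0 : ℝ), x + c • d ∈ P) : x ∉ P.extremePoints ℝ := by
  intro hx
  have hneg : ∀ᶠ c in 𝓝 (0 : ℝ), x + (-c) • d ∈ P :=
    (continuous_neg.tendsto' 0 0 neg_zero).eventually h
  obtain ⟨c, ⟨hplus, hminus⟩, hc⟩ :=
    (((h.and hneg).filter_mono nhdsWithin_le_nhds).and
      (self_mem_nhdsWithin : Set.Ioi (0 : ℝ) ∈ 𝓝[>] 0)).exists
  have hseg : x ∈ openSegment ℝ (x + c • d) (x + (-c) • d) :=
    ⟨1 / 2, 1 / 2, by norm_num, by norm_num, by norm_num, by module⟩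
  have := hx.2 hplus hminus hseg
  simp [hd, hc.ne'] at this

theorem eventually_add_mul_mem {s : Set ℝ} (hs : IsOpen s) {a : ℝ} (ha : a ∈ s) (b : ℝ) :
    ∀ᶠ c in 𝓝 (0 : ℝ), a + c * b ∈ s :=
  (Continuous.tendsto' (by fun_prop) 0 a (by simp)).eventually (hs.mem_nhds ha)

theorem eventually_add_mul_le {a r : ℝ} (h : a < r) (b : ℝ) :
    ∀ᶠ c in 𝓝 (0 : ℝ), a + c * b ≤ r :=
  (eventually_add_mul_mem isOpen_Iio h b).mono fun _ hc => le_of_lt hc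

section

variable {F ι : Type*}

def sumOn (S : Finset F) : Module.Dual ℝ (F → ℝ) := ∑ i ∈ S, LinearMap.proj i

@[simp] theorem sumOn_apply (S : Finset F) (d : F → ℝ) : sumOn S d = ∑ i ∈ S, d i := by
  simp [sumOn]

variable [Fintype F]

theorem exists_ne_zero_sum_eq_zero_of_card_lt [DecidableEq F] (s : Finset F) (A : Finset ι)
    (G : ι → Finset F) (Ψ : Finset (Module.Dual ℝ (F → ℝ)))
    (h : #(A.filter fun j => ¬Disjoint s (G j)) + #Ψ < #s) :
    ∃ d : F → ℝ, d ≠ 0 ∧ (∀ i ∉ s, d i = 0) ∧ (∀ j ∈ A, ∑ i ∈ G j, d i = 0) ∧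
      ∀ ψ ∈ Ψ, ψ d = 0 := by
  classical
  set T := A.filter fun j => ¬Disjoint s (G j)
  obtain ⟨d, hd0, hs, hΦ⟩ := exists_ne_zero_forall_eq_zero_of_card_lt s
    (T.image (sumOn ∘ G) ∪ Ψ) ((card_union_le _ _).trans_lt (by grw [card_image_le]; exact h))
  refine ⟨d, hd0, hs, fun j hj => ?_, fun ψ hψ => hΦ ψ (mem_union_right _ hψ)⟩
  by_cases hjT : j ∈ T
  · simpa using hΦ _ (mem_union_left _ (mem_image_of_mem _ hjT))
  · have hdisj : Disjoint s (G j) := by simpa [T, hj] using hjT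
    exact sum_eq_zero fun i hi => hs i (disjoint_right.1 hdisj hi)

noncomputable def fracCoords (y : F → ℝ) : Finset F := univ.filter fun i => 0 < y i ∧ y i < 1

theorem mem_fracCoords {y : F → ℝ} {i : F} : i ∈ fracCoords y ↔ 0 < y i ∧ y i < 1 := by
  simp [fracCoords]

theorem eq_zero_or_eq_one_of_notMem_fracCoords {y : F → ℝ} {i : F} (hy : 0 ≤ y i ∧ y i ≤ 1)
    (hi : i ∉ fracCoords y) : y i = 0 ∨ y i = 1 := by
  rw [mem_fracCoords, not_and_or, not_lt, not_lt] at hi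
  rcases hi with h | h
  · exact .inl (le_antisymm h hy.1)
  · exact .inr (le_antisymm hy.2 h)

theorem card_fracCoords_inter_ne_one_of_sum_eq_intCast [DecidableEq F] {y : F → ℝ}
    (hbox : ∀ i, 0 ≤ y i ∧ y i ≤ 1) {S : Finset F} {n : ℤ} (hS : ∑ i ∈ S, y i = n) :
    #(fracCoords y ∩ S) ≠ 1 := by
  intro h
  obtain ⟨i₀, hi₀⟩ := card_eq_one.1 h
  have hi₀S : i₀ ∈ fracCoords y ∩ S := hi₀ ▸ mem_singleton_self i₀
  have hrest : ∑ i ∈ S.erase i₀, y i = #((S.erase i₀).filter fun i => y i = 1) := by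
    rw [← sum_boole]
    refine sum_congr rfl fun i hi => ?_
    have hi' : i ∉ fracCoords y := fun hfrac => ne_of_mem_erase hi <|
      mem_singleton.1 (hi₀ ▸ mem_inter.2 ⟨hfrac, mem_of_mem_erase hi⟩)
    rcases eq_zero_or_eq_one_of_notMem_fracCoords (hbox i) hi' with h0 | h1 <;> simp [*]
  have hy₀ : y i₀ = ((n - #((S.erase i₀).filter fun i => y i = 1) : ℤ) : ℝ) := by
    rw [← add_sum_erase S y (mem_inter.1 hi₀S).2, hrest] at hS
    push_cast
    linarith
  obtain ⟨hpos, hlt⟩ := mem_fracCoords.1 (mem_inter.1 hi₀S).1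
  rw [hy₀] at hpos hlt
  norm_cast at hpos hlt
  omega

theorem two_mul_card_filter_not_disjoint_le [DecidableEq F] {y : F → ℝ}
    (hbox : ∀ i, 0 ≤ y i ∧ y i ≤ 1) {A : Finset ι} {G : ι → Finset F}
    (hG : (A : Set ι).PairwiseDisjoint G) (hA : ∀ j ∈ A, ∑ i ∈ G j, y i = 1) :
    2 * #(A.filter fun j => ¬Disjoint (fracCoords y) (G j)) ≤ #(fracCoords y ∩ A.biUnion G) := by
  rw [inter_biUnion, card_biUnion (hG.mono fun _ => inter_subset_right)]
  calc 2 * #(A.filter fun j => ¬Disjoint (fracCoords y) (G j))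
      = ∑ j ∈ A.filter fun j => ¬Disjoint (fracCoords y) (G j), 2 := by
        rw [sum_const, smul_eq_mul, mul_comm]
    _ ≤ ∑ j ∈ A.filter fun j => ¬Disjoint (fracCoords y) (G j), #(fracCoords y ∩ G j) := by
        refine sum_le_sum fun j hj => ?_
        obtain ⟨hjA, hmeet⟩ := mem_filter.1 hj
        have h0 : #(fracCoords y ∩ G j) ≠ 0 :=
          card_ne_zero.2 (not_disjoint_iff_nonempty_inter.1 hmeet)
        have h1 := card_fracCoords_inter_ne_one_of_sum_eq_intCast hbox (n := 1)
          (by rw [hA j hjA, Int.cast_one])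
        omega
    _ ≤ ∑ j ∈ A, #(fracCoords y ∩ G j) := sum_le_sum_of_subset (filter_subset _ _)

def auxPolytope (k m : ℕ) (Cstar Cfull Cpart : Finset ι) (Fj Bj : ι → Finset F) :
    Set (F → ℝ) :=
  {y | (∀ i, 0 ≤ y i ∧ y i ≤ 1) ∧
    (∑ i, y i ≤ (k : ℝ)) ∧
    (∀ j ∈ Cstar, ∑ i ∈ Fj j, y i = 1) ∧
    (∀ j ∈ Cfull, ∑ i ∈ Bj j, y i ≤ 1) ∧
    (∀ j ∈ Cpart, ∑ i ∈ Fj j, y i ≤ 1) ∧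
    ((m : ℝ) ≤ (Cfull.card : ℝ) + ∑ j ∈ Cpart, ∑ i ∈ Fj j, y i)}

variable {k m : ℕ} {Cstar Cfull Cpart : Finset ι} {Fj Bj : ι → Finset F}

theorem eventually_add_smul_mem_auxPolytope {y d : F → ℝ}
    (hy : y ∈ auxPolytope k m Cstar Cfull Cpart Fj Bj)
    (hBlt : ∀ j ∈ Cfull, ∑ i ∈ Bj j, y i < 1) (hFlt : ∀ j ∈ Cpart, ∑ i ∈ Fj j, y i < 1)
    (hsupp : ∀ i ∉ fracCoords y, d i = 0) (hcore : ∀ j ∈ Cstar, ∑ i ∈ Fj j, d i = 0)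
    (hcov : ∑ j ∈ Cpart, ∑ i ∈ Fj j, d i = 0) (hcard : ∑ i, d i = 0 ∨ ∑ i, y i < k) :
    ∀ᶠ c in 𝓝 (0 : ℝ), y + c • d ∈ auxPolytope k m Cstar Cfull Cpart Fj Bj := by
  obtain ⟨hbox, hk, hstar, -, -, hm⟩ := hy
  have hsum (S : Finset F) (c : ℝ) :
      ∑ i ∈ S, (y + c • d) i = ∑ i ∈ S, y i + c * ∑ i ∈ S, d i := by
    simp [sum_add_distrib, mul_sum]
  have hbox' : ∀ i, ∀ᶠ c in 𝓝 (0 : ℝ), 0 ≤ (y + c • d) i ∧ (y + c • d) i ≤ 1 := by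
    intro i
    by_cases hi : i ∈ fracCoords y
    · exact (eventually_add_mul_mem isOpen_Ioo (mem_fracCoords.1 hi) (d i)).mono
        fun c hc => ⟨hc.1.le, hc.2.le⟩
    · simpa [hsupp i hi] using hbox i
  have hk' : ∀ᶠ c in 𝓝 (0 : ℝ), ∑ i, (y + c • d) i ≤ k := by
    simp only [hsum]
    rcases hcard with h0 | hlt
    · simpa [h0] using hk
    · exact eventually_add_mul_le hlt _
  refine (eventually_all.2 hbox').and <| hk'.and <| .and ?_ <| .and ?_ <| .and ?_ ?_
  · exact .of_forall fun c j hj => by rw [hsum, hstar j hj, hcore j hj, mul_zero, add_zero]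
  · exact (eventually_all_finset _).2 fun j hj => by
      simpa only [hsum] using eventually_add_mul_le (hBlt j hj) _
  · exact (eventually_all_finset _).2 fun j hj => by
      simpa only [hsum] using eventually_add_mul_le (hFlt j hj) _
  · exact .of_forall fun c => by
      simpa only [hsum, sum_add_distrib, ← mul_sum, hcov, mul_zero, add_zero] using hm

theorem exists_direction_of_two_lt_card_fracCoords [DecidableEq F] {y : F → ℝ}
    (hy : y ∈ auxPolytope k m Cstar Cfull Cpart Fj Bj)
    (hFdisj : (Cstar : Set ι).PairwiseDisjoint Fj) (hfrac : 2 < #(fracCoords y)) :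
    ∃ d : F → ℝ, d ≠ 0 ∧ (∀ i ∉ fracCoords y, d i = 0) ∧ (∀ j ∈ Cstar, ∑ i ∈ Fj j, d i = 0) ∧
      ∑ j ∈ Cpart, ∑ i ∈ Fj j, d i = 0 ∧ (∑ i, d i = 0 ∨ ∑ i, y i < k) := by
  obtain ⟨hbox, hk, hstar, -⟩ := hy
  have hcoreCard := two_mul_card_filter_not_disjoint_le hbox hFdisj hstar
  set U := Cstar.biUnion Fj
  have hsplit : #(fracCoords y ∩ U) + #(fracCoords y \ U) = #(fracCoords y) :=
    card_inter_add_card_sdiff _ _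
  set cov : Module.Dual ℝ (F → ℝ) := ∑ j ∈ Cpart, sumOn (Fj j)
  have hcov (d : F → ℝ) : cov d = ∑ j ∈ Cpart, ∑ i ∈ Fj j, d i := by simp [cov]
  rcases hk.lt_or_eq with hslack | htight
  · obtain ⟨d, hd0, hs, hA, hΨ⟩ := exists_ne_zero_sum_eq_zero_of_card_lt (fracCoords y) Cstar Fj
      {cov} (by rw [card_singleton]; omega)
    exact ⟨d, hd0, hs, hA, by simpa [hcov] using hΨ, .inr hslack⟩
  obtain hout | hout | hout :
      #(fracCoords y \ U) = 0 ∨ #(fracCoords y \ U) = 1 ∨ 2 ≤ #(fracCoords y \ U) := by omega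
  · obtain ⟨d, hd0, hs, hA, hΨ⟩ := exists_ne_zero_sum_eq_zero_of_card_lt (fracCoords y) Cstar Fj
      {cov} (by rw [card_singleton]; omega)
    refine ⟨d, hd0, hs, hA, by simpa [hcov] using hΨ, .inl ?_⟩
    have hsU : ∀ i ∉ U, d i = 0 := fun i hiU =>
      hs i fun hfrac => card_ne_zero_of_mem (mem_sdiff.2 ⟨hfrac, hiU⟩) hout
    rw [← sum_subset (subset_univ U) fun i _ hiU => hsU i hiU, sum_biUnion hFdisj]
    exact sum_eq_zero hA
  · rw [sdiff_eq_inter_compl] at hout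
    refine absurd hout (card_fracCoords_inter_ne_one_of_sum_eq_intCast hbox (n := k - #Cstar) ?_)
    have := sum_compl_add_sum U y
    rw [sum_biUnion hFdisj, sum_congr rfl hstar, sum_const, nsmul_one] at this
    push_cast
    linarith
  · classical
    obtain ⟨d, hd0, hs, hA, hΨ⟩ := exists_ne_zero_sum_eq_zero_of_card_lt (fracCoords y) Cstar Fj
      ({sumOn univ, cov} : Finset (Module.Dual ℝ (F → ℝ)))
      (by grw [card_insert_le, card_singleton]; omega)
    exact ⟨d, hd0, hs, hA, by simpa [hcov] using hΨ cov, .inl (by simpa using hΨ (sumOn univ))⟩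

end

theorem stmt8_general {F ι : Type*} [Fintype F]
    (k m : ℕ)
    (Cstar Cfull Cpart : Finset ι)
    (Fj : ι → Finset F) (Bj : ι → Finset F)
    (hFdisj : ∀ j ∈ Cstar, ∀ j' ∈ Cstar, j ≠ j' → Disjoint (Fj j) (Fj j'))
    (P : Set (F → ℝ))
    (hP : P = {y : F → ℝ |
        (∀ i, 0 ≤ y i ∧ y i ≤ 1) ∧
        (∑ i, y i ≤ (k : ℝ)) ∧
        (∀ j ∈ Cstar, ∑ i ∈ Fj j, y i = 1) ∧
        (∀ j ∈ Cfull, ∑ i ∈ Bj j, y i ≤ 1) ∧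
        (∀ j ∈ Cpart, ∑ i ∈ Fj j, y i ≤ 1) ∧
        ((m : ℝ) ≤ (Cfull.card : ℝ) + ∑ j ∈ Cpart, ∑ i ∈ Fj j, y i)})
    (ystar : F → ℝ) (hext : ystar ∈ Set.extremePoints ℝ P)
    (hBlt : ∀ j ∈ Cfull, ∑ i ∈ Bj j, ystar i < 1)
    (hFlt : ∀ j ∈ Cpart, ∑ i ∈ Fj j, ystar i < 1) :
    (Finset.univ.filter fun i => 0 < ystar i ∧ ystar i < 1).card ≤ 2 := by
  classical
  subst hP
  by_contra! hfrac
  obtain ⟨d, hd0, hs, hA, hcov, hcard⟩ := exists_direction_of_two_lt_card_fracCoords hext.1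
    (fun j hj j' hj' => hFdisj j hj j' hj') hfrac
  exact notMem_extremePoints_of_eventually_add_smul_mem hd0
    (eventually_add_smul_mem_auxPolytope hext.1 hBlt hFlt hs hA hcov hcard) hext

/-- Almost-integrality of extreme points of the auxiliary iterative-rounding LP
(Lemma 4.3): if none of the non-core constraints `y(B_j) ≤ 1` (full clients) and
`y(F_j) ≤ 1` (partial clients) are tight at an extreme point `y*` of the polytope,
then `y*` has at most two fractional coordinates. -/
theorem stmt8 {F ι : Type*} [Fintype F] [DecidableEq F]
    (k m : ℕ)
    (Cstar Cfull Cpart : Finset ι)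
    (hd1 : Disjoint Cstar Cfull) (hd2 : Disjoint Cstar Cpart) (hd3 : Disjoint Cfull Cpart)
    (Fj : ι → Finset F) (Bj : ι → Finset F)
    (hFdisj : ∀ j ∈ Cstar, ∀ j' ∈ Cstar, j ≠ j' → Disjoint (Fj j) (Fj j'))
    (P : Set (F → ℝ))
    (hP : P = {y : F → ℝ |
        (∀ i, 0 ≤ y i ∧ y i ≤ 1) ∧
        (∑ i, y i ≤ (k : ℝ)) ∧
        (∀ j ∈ Cstar, ∑ i ∈ Fj j, y i = 1) ∧
        (∀ j ∈ Cfull, ∑ i ∈ Bj j, y i ≤ 1) ∧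
        (∀ j ∈ Cpart, ∑ i ∈ Fj j, y i ≤ 1) ∧
        ((m : ℝ) ≤ (Cfull.card : ℝ) + ∑ j ∈ Cpart, ∑ i ∈ Fj j, y i)})
    (ystar : F → ℝ) (hext : ystar ∈ Set.extremePoints ℝ P)
    (hBlt : ∀ j ∈ Cfull, ∑ i ∈ Bj j, ystar i < 1)
    (hFlt : ∀ j ∈ Cpart, ∑ i ∈ Fj j, ystar i < 1) :
    (Finset.univ.filter fun i => 0 < ystar i ∧ ystar i < 1).card ≤ 2 :=
  stmt8_general k m Cstar Cfull Cpart Fj Bj hFdisj P hP ystar hext hBlt hFlt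
end

section
/- Let F be a finite set, w ∈ ℝ_{≥0}^F, W ≥ 0, and let {F_j}_{j∈J} be a family of pairwise disjoint subsets of F. Then every extreme point of the polytope {y ∈ [0,1]^F : Σ_{i∈F_j} y_i = 1 for all j ∈ J, and Σ_{i∈F} w_i y_i ≤ W} has at most two coordinates lying strictly between 0 and 1. -/
/-!
Let `S` be the set of fractional coordinates of an extreme point `y`. A block `F_j` meeting `S`
meets it in at least two coordinates, since the other entries of the block are `0` or `1` and
its sum is `1`; by disjointness at most `|S| / 2` blocks meet `S`. If `|S| ≥ 3`, these equalities
together with the knapsack constraint are fewer than `|S|` linear conditions, so some nonzero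
direction `d` supported on `S` preserves all of them, and `y ± t d` stays in the polytope for
small `t`, contradicting extremality.
-/

open Finset Filter Topology

lemma eq_zero_of_eventually_add_smul_mem {E : Type*} [AddCommGroup E] [Module ℝ E]
    {A : Set E} {y d : E} (hy : y ∈ A.extremePoints ℝ)
    (hd : ∀ᶠ t in 𝓝 (0 : ℝ), y + t • d ∈ A) : d = 0 := by
  have hneg : ∀ᶠ t in 𝓝 (0 : ℝ), y + (-t) • d ∈ A :=
    (continuous_neg.tendsto' 0 0 neg_zero).eventually hd
  obtain ⟨t, ⟨hplus, hminus⟩, ht⟩ :=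
    (((hd.and hneg).filter_mono nhdsWithin_le_nhds).and self_mem_nhdsWithin :
      ∀ᶠ t in 𝓝[≠] (0 : ℝ), _).exists
  have hmid : y ∈ openSegment ℝ (y + t • d) (y + (-t) • d) :=
    ⟨1 / 2, 1 / 2, by norm_num, by norm_num, by norm_num, by module⟩
  have htd : t • d = 0 := by simpa using (mem_extremePoints.1 hy).2 _ hplus _ hminus hmid |>.1
  exact (smul_eq_zero.1 htd).resolve_left ht

lemma eventually_forall_add_mul_mem_Icc {F : Type*} [Finite F] {y d : F → ℝ} {a b : ℝ}
    (hy : ∀ i, y i ∈ Set.Icc a b) (hd : ∀ i, d i ≠ 0 → y i ∈ Set.Ioo a b) :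
    ∀ᶠ t in 𝓝 (0 : ℝ), ∀ i, y i + t * d i ∈ Set.Icc a b := by
  refine eventually_all.2 fun i => ?_
  by_cases hdi : d i = 0
  · simp [hdi, hy i]
  have hlim : Tendsto (fun t => y i + t * d i) (𝓝 0) (𝓝 (y i)) :=
    (continuous_const.add (continuous_id.mul continuous_const)).tendsto' 0 _ (by simp)
  exact (hlim.eventually (isOpen_Ioo.mem_nhds (hd i hdi))).mono
    fun _ h => Set.Ioo_subset_Icc_self h

lemma one_lt_card_filter_mem_Ioo_of_sum_eq_one {F : Type*} [DecidableEq F] {s : Finset F}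
    {y : F → ℝ} (hy : ∀ k ∈ s, y k ∈ Set.Icc 0 1) (hsum : ∑ k ∈ s, y k = 1) {i : F} (hi : i ∈ s)
    (hfrac : y i ∈ Set.Ioo 0 1) : 1 < #{k ∈ s | y k ∈ Set.Ioo 0 1} := by
  by_contra! hcard
  have hint : ∀ k ∈ s.erase i, y k = 0 ∨ y k = 1 := by
    intro k hk
    have hk_not : y k ∉ Set.Ioo 0 1 := fun hk' => ne_of_mem_erase hk <|
      card_le_one.1 hcard k (mem_filter.2 ⟨mem_of_mem_erase hk, hk'⟩) i (mem_filter.2 ⟨hi, hfrac⟩)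
    have := hy k (mem_of_mem_erase hk)
    simp only [Set.mem_Icc, Set.mem_Ioo, not_and_or, not_lt] at this hk_not
    rcases hk_not with h | h
    · exact .inl (le_antisymm h this.1)
    · exact .inr (le_antisymm this.2 h)
  rw [← add_sum_erase s y hi] at hsum
  by_cases hone : ∃ k ∈ s.erase i, y k = 1
  · obtain ⟨k, hk, hk1⟩ := hone
    have := single_le_sum (fun m hm => (hy m (mem_of_mem_erase hm)).1) hk
    linarith [hfrac.1]
  · push Not at hone
    have : ∑ k ∈ s.erase i, y k = 0 :=
      sum_eq_zero fun k hk => (hint k hk).resolve_right (hone k hk)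
    linarith [hfrac.2]

lemma mul_card_le_card_biUnion {ι α : Type*} [DecidableEq α] {s : Finset ι} {f : ι → Finset α}
    (hs : (s : Set ι).PairwiseDisjoint f) {n : ℕ} (hn : ∀ i ∈ s, n ≤ #(f i)) :
    n * #s ≤ #(s.biUnion f) := by
  rw [card_biUnion hs, mul_comm, ← smul_eq_mul]
  exact card_nsmul_le_sum s _ n hn

lemma exists_ne_zero_support_subset_forall_apply_eq_zero {K F κ : Type*} [Field K] [Fintype F]
    [Fintype κ] (S : Finset F) (φ : κ → (F → K) →ₗ[K] K) (hcard : Fintype.card κ < #S) :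
    ∃ d ≠ 0, Function.support d ⊆ S ∧ ∀ k, φ k d = 0 := by
  classical
  let L : (F → K) →ₗ[K] (κ → K) × ((Sᶜ : Finset F) → K) :=
    (LinearMap.pi φ).prod (LinearMap.pi fun i : (Sᶜ : Finset F) => LinearMap.proj (i : F))
  have hker : LinearMap.ker L ≠ ⊥ := LinearMap.ker_ne_bot_of_finrank_lt <| by
    simp only [Module.finrank_prod, Module.finrank_pi, Fintype.card_coe, card_compl]
    have := card_le_univ S
    omega
  obtain ⟨d, hdL, hd0⟩ := (Submodule.ne_bot_iff _).1 hker
  refine ⟨d, hd0, fun i hi => ?_, fun k => congrArg (fun p => p.1 k) hdL⟩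
  by_contra hiS
  exact hi (congrArg (fun p => p.2 ⟨i, mem_compl.2 hiS⟩) hdL)

noncomputable def fractionalCoords {F : Type*} [Fintype F] (y : F → ℝ) : Finset F :=
  {i | y i ∈ Set.Ioo 0 1}

lemma two_mul_card_le_card_fractionalCoords {F ι : Type*} [Fintype F] [DecidableEq F]
    {J : Finset ι} {Fj : ι → Finset F} (hdisj : (J : Set ι).PairwiseDisjoint Fj) {y : F → ℝ}
    (hy : ∀ i, y i ∈ Set.Icc 0 1) (hblock : ∀ j ∈ J, ∑ i ∈ Fj j, y i = 1) :
    2 * #{j ∈ J | ∃ i ∈ Fj j, y i ∈ Set.Ioo 0 1} ≤ #(fractionalCoords y) := calc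
  _ ≤ #({j ∈ J | ∃ i ∈ Fj j, y i ∈ Set.Ioo 0 1}.biUnion
        fun j => {i ∈ Fj j | y i ∈ Set.Ioo 0 1}) := by
    refine mul_card_le_card_biUnion
      ((hdisj.subset (coe_subset.2 (filter_subset _ _))).mono fun j => filter_subset _ _)
      fun j hj => ?_
    obtain ⟨hj, i, hi, hfrac⟩ := mem_filter.1 hj
    exact one_lt_card_filter_mem_Ioo_of_sum_eq_one (fun k _ => hy k) (hblock j hj) hi hfrac
  _ ≤ _ := card_le_card <| biUnion_subset.2 fun _ _ => filter_subset_filter _ (subset_univ _)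

def knapsackPolytope {F ι : Type*} [Fintype F] (w : F → ℝ) (W : ℝ) (J : Finset ι)
    (Fj : ι → Finset F) : Set (F → ℝ) :=
  {y | (∀ i, 0 ≤ y i ∧ y i ≤ 1) ∧ (∀ j ∈ J, ∑ i ∈ Fj j, y i = 1) ∧ ∑ i, w i * y i ≤ W}

lemma eventually_add_smul_mem_knapsackPolytope {F ι : Type*} [Fintype F] {w : F → ℝ} {W : ℝ}
    {J : Finset ι} {Fj : ι → Finset F} {y d : F → ℝ} (hy : y ∈ knapsackPolytope w W J Fj)
    (hd_frac : ∀ i, d i ≠ 0 → y i ∈ Set.Ioo 0 1) (hd_block : ∀ j ∈ J, ∑ i ∈ Fj j, d i = 0)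
    (hd_weight : ∑ i, w i * d i = 0) :
    ∀ᶠ t in 𝓝 (0 : ℝ), y + t • d ∈ knapsackPolytope w W J Fj := by
  obtain ⟨hbox, hblock, hknap⟩ := hy
  filter_upwards [eventually_forall_add_mul_mem_Icc hbox hd_frac] with t ht
  refine ⟨ht, fun j hj => ?_, ?_⟩
  · simp [sum_add_distrib, ← mul_sum, hblock j hj, hd_block j hj]
  · simpa [mul_add, sum_add_distrib, mul_left_comm _ t, ← mul_sum, hd_weight] using hknap

theorem stmt9_general {F ι : Type*} [Fintype F]
    (w : F → ℝ) (W : ℝ)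
    (J : Finset ι) (Fj : ι → Finset F)
    (hdisj : ∀ j ∈ J, ∀ j' ∈ J, j ≠ j' → Disjoint (Fj j) (Fj j'))
    (P : Set (F → ℝ))
    (hP : P = {y : F → ℝ |
        (∀ i, 0 ≤ y i ∧ y i ≤ 1) ∧
        (∀ j ∈ J, ∑ i ∈ Fj j, y i = 1) ∧
        (∑ i, w i * y i ≤ W)})
    (ystar : F → ℝ) (hext : ystar ∈ Set.extremePoints ℝ P) :
    (Finset.univ.filter fun i => 0 < ystar i ∧ ystar i < 1).card ≤ 2 := by
  classical
  subst hP
  obtain ⟨hbox, hblock, -⟩ := hext.1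
  change #(fractionalCoords ystar) ≤ 2
  by_contra! hS
  set J' := J.filter fun j => ∃ i ∈ Fj j, ystar i ∈ Set.Ioo 0 1
  have hJ' : 2 * #J' ≤ #(fractionalCoords ystar) :=
    two_mul_card_le_card_fractionalCoords hdisj hbox hblock
  let φ : Option J' → (F → ℝ) →ₗ[ℝ] ℝ := fun o =>
    o.elim (∑ i, w i • LinearMap.proj i) fun j => ∑ i ∈ Fj j, LinearMap.proj i
  obtain ⟨d, hd0, hdS, hdφ⟩ := exists_ne_zero_support_subset_forall_apply_eq_zero
    (fractionalCoords ystar) φ (by rw [Fintype.card_option, Fintype.card_coe]; omega)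
  refine hd0 <| eq_zero_of_eventually_add_smul_mem hext <|
    eventually_add_smul_mem_knapsackPolytope hext.1 (fun i hi => mem_filter.1 (hdS hi) |>.2)
      (fun j hj => ?_) (by simpa [φ] using hdφ none)
  by_cases hj' : j ∈ J'
  · simpa [φ] using hdφ (some ⟨j, hj'⟩)
  · exact sum_eq_zero fun i hi => by_contra fun hdi =>
      hj' (mem_filter.2 ⟨hj, i, hi, mem_filter.1 (hdS hdi) |>.2⟩)

/-- Almost-integrality for knapsack median: every extreme point of the intersection of
the unit cube with a family of disjoint equality constraints `y(F_j) = 1` and a single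
knapsack constraint `Σ w_i y_i ≤ W` has at most two fractional coordinates. -/
theorem stmt9 {F ι : Type*} [Fintype F] [DecidableEq F]
    (w : F → ℝ) (hw : ∀ i, 0 ≤ w i) (W : ℝ) (hW : 0 ≤ W)
    (J : Finset ι) (Fj : ι → Finset F)
    (hdisj : ∀ j ∈ J, ∀ j' ∈ J, j ≠ j' → Disjoint (Fj j) (Fj j'))
    (P : Set (F → ℝ))
    (hP : P = {y : F → ℝ |
        (∀ i, 0 ≤ y i ∧ y i ≤ 1) ∧
        (∀ j ∈ J, ∑ i ∈ Fj j, y i = 1) ∧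
        (∑ i, w i * y i ≤ W)})
    (ystar : F → ℝ) (hext : ystar ∈ Set.extremePoints ℝ P) :
    (Finset.univ.filter fun i => 0 < ystar i ∧ ystar i < 1).card ≤ 2 :=
  stmt9_general w W J Fj hdisj P hP ystar hext
end

section
/- For every integer t ≥ 2 there exists an RkMed instance (F, C, d, k = 1, m = t³ + t) for which every feasible integral solution has cost at least t³ + t, while LP_basic admits a feasible fractional solution of value t² + t; hence the integrality gap of LP_basic for RkMed is at least (t² + 1)/(t + 1), and thus unbounded. Concretely one may take F = {i₁, i₂}, C the disjoint union of a set A of t³ clients all at distance 0 from i₁, and a set B of t³ + t² mutually collocated clients at distance 1 from i₂, with all distances between points of {i₁} ∪ A and points of {i₂} ∪ B equal to D = 2(t³ + t) + 1; the fractional solution opens i₁ to extent 1 − 1/t and i₂ to extent 1/t. -/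
/-!
With `k = 1` an integral solution opens a single facility. Opening `i₁` serves at most the
`t³` clients of `A` for free, so one of the `t³ + t` served clients lies in `B` and alone costs
`D ≥ t³ + t`; opening `i₂` costs at least `1` per served client. The LP instead opens `i₁` to
extent `1 - 1/t`, serving `A` at cost `0`, and `i₂` to extent `1/t`, serving `B` at cost `1`:
this covers `t³ (1 - 1/t) + (t³ + t²)/t = t³ + t` clients at cost `(t³ + t²)/t = t² + t`.
-/

open Finset

/-- `dmin d p S` is the distance from the point `p` to the (nonempty) set `S`
under the pseudometric `d`, i.e. `min_{i ∈ S} d p i`. -/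
noncomputable def dmin {α : Type*} (d : α → α → ℝ) (p : α) (S : Finset α) : ℝ :=
  sInf ((fun i => d p i) '' (S : Set α))

lemma dmin_singleton {α : Type*} (d : α → α → ℝ) (p i : α) : dmin d p {i} = d p i := by
  simp [dmin]

namespace RkMedGap

/-- `inl false` and `inl true` are the facilities `i₁` and `i₂`, `inr (inl _)` the `a` clients
of `A` and `inr (inr _)` the `b` clients of `B`. -/
abbrev Point (a b : ℕ) : Type := Bool ⊕ (Fin a ⊕ Fin b)

variable {a b : ℕ}

/-- Pulling back the metric of `ℝ` makes `d` a pseudometric for free: `i₁` and `A` sit at `0`,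
`B` at `D` and `i₂` at `D + 1`. So `d(i₂, A) = d(i₂, i₁) = D + 1` rather than `D`; only
`d(B, i₁) = D` and `d(B, i₂) = 1` matter. -/
def position (D : ℝ) : Point a b → ℝ
  | .inl false => 0
  | .inl true => D + 1
  | .inr (.inl _) => 0
  | .inr (.inr _) => D

def d (D : ℝ) (p q : Point a b) : ℝ := dist (position D p) (position D q)

def facilities : Finset (Point a b) := univ.map Function.Embedding.inl

def clients : Finset (Point a b) := univ.map Function.Embedding.inr

lemma disjoint_facilities_clients : Disjoint (facilities : Finset (Point a b)) clients :=
  disjoint_map_inl_map_inr _ _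

lemma card_clients : (clients : Finset (Point a b)).card = a + b := by
  simp [clients]

lemma mem_facilities {i : Point a b} : i ∈ facilities ↔ i = .inl false ∨ i = .inl true := by
  cases i with
  | inl i => cases i <;> simp [facilities]
  | inr j => simp [facilities]

lemma sum_facilities {M : Type*} [AddCommMonoid M] (f : Point a b → M) :
    ∑ i ∈ facilities, f i = f (.inl false) + f (.inl true) := by
  simp [facilities, add_comm]

lemma sum_clients {M : Type*} [AddCommMonoid M] (f : Point a b → M) :
    ∑ j ∈ clients, f j = ∑ k, f (.inr (.inl k)) + ∑ k, f (.inr (.inr k)) := by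
  simp [clients, Fintype.sum_sum_type]

variable {D : ℝ}

lemma d_pos_of_mem_facilities (hD : 0 ≤ D) {i i' : Point a b} (hi : i ∈ facilities)
    (hi' : i' ∈ facilities) (hne : i ≠ i') : 0 < d D i i' := by
  refine dist_pos.mpr ?_
  rw [mem_facilities] at hi hi'
  rcases hi with rfl | rfl <;> rcases hi' with rfl | rfl <;> simp only [position] <;>
    first | exact absurd rfl hne | linarith

lemma one_le_d_of_mem_clients (hD : 0 ≤ D) {j : Point a b} (hj : j ∈ clients) :
    1 ≤ d D j (.inl true) := by
  rw [d, dist_comm, Real.dist_eq]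
  refine le_trans ?_ (le_abs_self _)
  rcases j with _ | (_ | _)
  · simp [clients] at hj
  all_goals simp only [position]; linarith

lemma exists_mem_d_eq_of_card_lt {Cs : Finset (Point a b)} (hCs : Cs ⊆ clients)
    (hcard : a < Cs.card) : ∃ j ∈ Cs, d D j (.inl false) = |D| := by
  let A : Finset (Point a b) :=
    univ.map (Function.Embedding.inl.trans Function.Embedding.inr)
  obtain ⟨j, hj, hjA⟩ := exists_mem_notMem_of_card_lt_card (s := A) (by simpa [A] using hcard)
  refine ⟨j, hj, ?_⟩
  have := hCs hj
  rcases j with _ | (_ | _)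
  · simp [clients] at this
  · simp [A] at hjA
  · simp [d, position]

theorem le_sum_dmin_of_card_le {m : ℕ} (hmD : (m : ℝ) ≤ D) (ham : a < m)
    {S Cs : Finset (Point a b)} (hSF : S ⊆ facilities) (hS : S.Nonempty) (hS1 : S.card ≤ 1)
    (hCs : Cs ⊆ clients) (hm : m ≤ Cs.card) : (m : ℝ) ≤ ∑ j ∈ Cs, dmin (d D) j S := by
  obtain ⟨i, rfl⟩ : ∃ i, S = {i} := card_eq_one.mp (le_antisymm hS1 hS.card_pos)
  simp only [dmin_singleton]
  rcases mem_facilities.mp (hSF (mem_singleton_self i)) with rfl | rfl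
  · obtain ⟨j, hj, hdj⟩ := exists_mem_d_eq_of_card_lt (D := D) hCs (ham.trans_le hm)
    calc (m : ℝ) ≤ |D| := hmD.trans (le_abs_self D)
      _ = d D j (.inl false) := hdj.symm
      _ ≤ ∑ j ∈ Cs, d D j (.inl false) := single_le_sum (fun _ _ => dist_nonneg) hj
  · have hD : 0 ≤ D := (Nat.cast_nonneg m).trans hmD
    calc (m : ℝ) ≤ Cs.card • (1 : ℝ) := by simpa using hm
      _ ≤ ∑ j ∈ Cs, d D j (.inl true) :=
        card_nsmul_le_sum _ _ _ fun j hj => one_le_d_of_mem_clients hD (hCs hj)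

def assignment (θ : ℝ) : Point a b → Point a b → ℝ
  | .inl false, .inr (.inl _) => θ
  | .inl true, .inr (.inr _) => 1 - θ
  | _, _ => 0

def opening (θ : ℝ) : Point a b → ℝ
  | .inl false => θ
  | .inl true => 1 - θ
  | .inr _ => 0

variable {θ : ℝ}

lemma assignment_nonneg (h0 : 0 ≤ θ) (h1 : θ ≤ 1) (i j : Point a b) :
    0 ≤ assignment θ i j := by
  rcases i with (_ | _) | _ <;> rcases j with _ | (_ | _) <;> simp only [assignment] <;> linarith

lemma opening_nonneg (h0 : 0 ≤ θ) (h1 : θ ≤ 1) (i : Point a b) : 0 ≤ opening θ i := by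
  rcases i with (_ | _) | _ <;> simp only [opening] <;> linarith

lemma assignment_le_opening (h0 : 0 ≤ θ) (h1 : θ ≤ 1) (i j : Point a b) :
    assignment θ i j ≤ opening θ i := by
  rcases i with (_ | _) | _ <;> rcases j with _ | (_ | _) <;>
    simp only [assignment, opening] <;> linarith

lemma sum_assignment_le_one (h0 : 0 ≤ θ) (h1 : θ ≤ 1) (j : Point a b) :
    ∑ i ∈ facilities, assignment θ i j ≤ 1 := by
  rw [sum_facilities]
  rcases j with _ | (_ | _) <;> simp only [assignment] <;> linarith

lemma sum_opening : ∑ i ∈ facilities, opening θ (i : Point a b) = 1 := by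
  simp [sum_facilities, opening]

lemma sum_sum_assignment :
    ∑ i ∈ facilities, ∑ j ∈ clients, assignment θ (i : Point a b) j =
      a * θ + b * (1 - θ) := by
  simp [sum_facilities, sum_clients, assignment, mul_sub]

lemma sum_sum_assignment_mul_d :
    ∑ i ∈ facilities, ∑ j ∈ clients, assignment θ (i : Point a b) j * d D i j =
      b * (1 - θ) := by
  simp [sum_facilities, sum_clients, assignment, d, position, mul_sub]

end RkMedGap

/-- Gap Example 1: for every `t ≥ 2` there is an RkMed instance with `k = 1` and
`m = t³ + t` on which every feasible integral solution costs at least `t³ + t`,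
while the natural LP relaxation admits a feasible fractional solution of value
`t² + t`; hence the integrality gap of the natural LP is at least `(t²+1)/(t+1)`. -/
theorem stmt13 (t : ℕ) (ht : 2 ≤ t) :
    ∃ (α : Type) (F C : Finset α) (d : α → α → ℝ),
      -- d is a pseudometric, positive on distinct facilities
      (∀ p, d p p = 0) ∧ (∀ p q, d p q = d q p) ∧ (∀ p q, 0 ≤ d p q) ∧
      (∀ p q r, d p r ≤ d p q + d q r) ∧
      Disjoint F C ∧
      (∀ i ∈ F, ∀ i' ∈ F, i ≠ i' → 0 < d i i') ∧
      t ^ 3 + t ≤ C.card ∧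
      -- every integral solution (k = 1, m = t³ + t) has cost at least t³ + t
      (∀ S : Finset α, S ⊆ F → S.Nonempty → S.card ≤ 1 →
        ∀ Cs : Finset α, Cs ⊆ C → t ^ 3 + t ≤ Cs.card →
          ((t : ℝ) ^ 3 + t) ≤ ∑ j ∈ Cs, dmin d j S) ∧
      -- the natural LP has a feasible fractional solution of value t² + t
      (∃ (x : α → α → ℝ) (y : α → ℝ),
        (∀ i ∈ F, ∀ j ∈ C, 0 ≤ x i j) ∧
        (∀ i ∈ F, 0 ≤ y i) ∧
        (∀ i ∈ F, ∀ j ∈ C, x i j ≤ y i) ∧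
        (∀ j ∈ C, ∑ i ∈ F, x i j ≤ 1) ∧
        (∑ i ∈ F, y i ≤ (1 : ℝ)) ∧
        (((t : ℝ) ^ 3 + t) ≤ ∑ i ∈ F, ∑ j ∈ C, x i j) ∧
        ∑ i ∈ F, ∑ j ∈ C, x i j * d i j = (t : ℝ) ^ 2 + t) := by
  have ht0 : (0 : ℝ) < t := by exact_mod_cast (by omega : 0 < t)
  have ht1 : (1 : ℝ) ≤ t := by exact_mod_cast (by omega : 1 ≤ t)
  set D : ℝ := 2 * ((t : ℝ) ^ 3 + t) + 1
  have hmD : ((t ^ 3 + t : ℕ) : ℝ) ≤ D := by push_cast; linarith [pow_pos ht0 3]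
  have hθ0 : 0 ≤ 1 - 1 / (t : ℝ) := sub_nonneg.mpr ((div_le_one ht0).mpr ht1)
  have hθ1 : 1 - 1 / (t : ℝ) ≤ 1 := sub_le_self _ (by positivity)
  refine ⟨RkMedGap.Point (t ^ 3) (t ^ 3 + t ^ 2), RkMedGap.facilities, RkMedGap.clients,
    RkMedGap.d D, fun _ => dist_self _, fun _ _ => dist_comm _ _, fun _ _ => dist_nonneg,
    fun _ _ _ => dist_triangle _ _ _, RkMedGap.disjoint_facilities_clients,
    fun _ hi _ hi' => RkMedGap.d_pos_of_mem_facilities ((Nat.cast_nonneg _).trans hmD) hi hi',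
    ?_, fun S hSF hS hS1 Cs hCs hm => ?_,
    RkMedGap.assignment (1 - 1 / t), RkMedGap.opening (1 - 1 / t),
    fun _ _ _ _ => RkMedGap.assignment_nonneg hθ0 hθ1 _ _,
    fun _ _ => RkMedGap.opening_nonneg hθ0 hθ1 _,
    fun _ _ _ _ => RkMedGap.assignment_le_opening hθ0 hθ1 _ _,
    fun j _ => RkMedGap.sum_assignment_le_one hθ0 hθ1 j, RkMedGap.sum_opening.le, ?_, ?_⟩
  · rw [RkMedGap.card_clients]
    have := Nat.le_self_pow (by norm_num : 2 ≠ 0) t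
    omega
  · exact_mod_cast RkMedGap.le_sum_dmin_of_card_le hmD (by omega) hSF hS hS1 hCs hm
  · rw [RkMedGap.sum_sum_assignment]
    apply le_of_eq
    push_cast
    field_simp
    ring
  · rw [RkMedGap.sum_sum_assignment_mul_d]
    push_cast
    field_simp
    ring
end
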